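/- (Partial q-difference equation in x for 2D q-Genocchi polynomials.) For every n ≥ 1: q^{n−1} G_{n,q}(x,y) + Σ_{k=1}^{n} (q^{n−k}/[k]_q!) (α_k^G + [k]_q β_{k−1}^G y) D_{q,x}^{k} G_{n,q}(x,y) + q^{n} x · D_{q,x} G_{n,q}(x,y) − [n]_q · G_{n,q}(qx,y) = 0, where G_{n,q}(qx,y) denotes the polynomial obtained from G_{n,q}(x,y) by substituting qx for x. -/

import Mathlib

/-!
The Appell polynomial `A_n = appell q G n` is the `q`-binomial convolution
`A_n = ∑ₛ [n, s] G_{n-s} M_s` of `G` with the Gauss polynomials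
`M_s = (x + y)(x + q y) ⋯ (x + q^(s-1) y)`. Hence `D_{q,x} A_n = [n] A_{n-1}`, and
`P(qx, y) = P + (q - 1) x D_{q,x} P` turns the equation into a linear combination of the `M_s`.
The convolutions of `A` with `α` and `β` are computed with `q`-exponential generating functions:
the Genocchi recurrence reads `g(t) (e_q(t) + 1) = 2t`, and eliminating `e_q` between it and its
rescaling `t ↦ qt`, where `e_q(qt) = (1 + (q - 1) t) e_q(t)`, gives
`(q - 1) (2t - g(t)) g(qt) = 2q g(t) - 2 g(qt)`, whose coefficients are exactly the two
convolutions. Finally `x M_s + q^s y M_s = M_{s+1}` collects the remaining terms, and the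
coefficient of each `M_s` vanishes because `[n] = [s] + q^s [n - s]`.
-/

noncomputable section

open Finset MvPolynomial

/-- The `q`-integer `[n]_q = 1 + q + ⋯ + q^(n-1)`. -/
def qInt {K : Type*} [Field K] (q : K) (n : ℕ) : K := ∑ i ∈ Finset.range n, q ^ i

/-- The `q`-factorial `[n]_q! = [1]_q [2]_q ⋯ [n]_q`. -/
def qFact {K : Type*} [Field K] (q : K) (n : ℕ) : K := ∏ k ∈ Finset.range n, qInt q (k + 1)

/-- The `q`-binomial coefficient `[n choose k]_q`. -/
def qChoose {K : Type*} [Field K] (q : K) (n k : ℕ) : K :=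
  qFact q n / (qFact q k * qFact q (n - k))

/-- The partial `q`-derivative in the variable `v` (v = 0 is `x`, v = 1 is `y`),
the linear operator determined by `D_{q,x}(x^m y^l) = [m]_q x^(m-1) y^l` and
`D_{q,y}(x^m y^l) = [l]_q x^m y^(l-1)`. -/
def qDeriv {K : Type*} [Field K] (q : K) (v : Fin 2) (P : MvPolynomial (Fin 2) K) :
    MvPolynomial (Fin 2) K :=
  ∑ m ∈ P.support, monomial (m - Finsupp.single v 1) (P.coeff m * qInt q (m v))

/-- Substitution `x ↦ c·x` in a polynomial in the two variables `x = X 0`, `y = X 1`. -/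
def substX {K : Type*} [Field K] (c : K) (P : MvPolynomial (Fin 2) K) :
    MvPolynomial (Fin 2) K :=
  aeval (fun i : Fin 2 => if i = 0 then C c * X 0 else X 1) P

/-- Substitution `y ↦ c·y` in a polynomial in the two variables `x = X 0`, `y = X 1`. -/
def substY {K : Type*} [Field K] (c : K) (P : MvPolynomial (Fin 2) K) :
    MvPolynomial (Fin 2) K :=
  aeval (fun i : Fin 2 => if i = 0 then X 0 else C c * X 1) P

/-- The 2D `q`-Appell polynomials attached to a coefficient sequence `a`:
`A_{n,q}(x,y) = Σ_{i+j+k=n} ([n]_q!/([i]_q![j]_q![k]_q!)) a_i q^(k(k-1)/2) x^j y^k`. -/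
def appell {K : Type*} [Field K] (q : K) (a : ℕ → K) (n : ℕ) : MvPolynomial (Fin 2) K :=
  ∑ i ∈ Finset.range (n + 1), ∑ j ∈ Finset.range (n + 1 - i),
    monomial (Finsupp.single (0 : Fin 2) j + Finsupp.single (1 : Fin 2) (n - i - j))
      (qFact q n / (qFact q i * qFact q j * qFact q (n - i - j)) * a i *
        q ^ ((n - i - j) * (n - i - j - 1) / 2))

section QNumbers

variable {K : Type*} [Field K] (q : K)

@[simp] lemma qInt_zero : qInt q 0 = 0 := by simp [qInt]

@[simp] lemma qInt_one : qInt q 1 = 1 := by simp [qInt]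

lemma qInt_add (m n : ℕ) : qInt q (m + n) = qInt q m + q ^ m * qInt q n := by
  simp [qInt, sum_range_add, pow_add, mul_sum]

lemma sub_one_mul_qInt (n : ℕ) : (q - 1) * qInt q n = q ^ n - 1 := by
  rw [mul_comm]; exact geom_sum_mul q n

@[simp] lemma qFact_zero : qFact q 0 = 1 := by simp [qFact]

@[simp] lemma qFact_one : qFact q 1 = 1 := by simp [qFact]

lemma qFact_succ (n : ℕ) : qFact q (n + 1) = qFact q n * qInt q (n + 1) := prod_range_succ _ _

variable {q}

lemma qFact_ne_zero (hq : ∀ n : ℕ, 1 ≤ n → qInt q n ≠ 0) (n : ℕ) : qFact q n ≠ 0 :=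
  prod_ne_zero_iff.mpr fun _ _ => hq _ (by omega)

lemma qChoose_zero_right (hq : ∀ n : ℕ, 1 ≤ n → qInt q n ≠ 0) (n : ℕ) : qChoose q n 0 = 1 := by
  simp [qChoose, qFact_ne_zero hq]

lemma qChoose_mul_qChoose (hq : ∀ n : ℕ, 1 ≤ n → qInt q n ≠ 0) {n k s : ℕ} (h : k + s ≤ n) :
    qChoose q n k * qChoose q (n - k) s = qChoose q n s * qChoose q (n - s) k := by
  simp only [qChoose, show n - k - s = n - s - k by omega]
  field_simp [qFact_ne_zero hq]

lemma qInt_succ_mul_qChoose (hq : ∀ n : ℕ, 1 ≤ n → qInt q n ≠ 0) {n k : ℕ} (h : k ≤ n) :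
    qInt q (n + 1) * qChoose q n k = qChoose q (n + 1) (k + 1) * qInt q (k + 1) := by
  simp only [qChoose, qFact_succ, show n + 1 - (k + 1) = n - k by omega]
  field_simp [qFact_ne_zero hq, hq (k + 1) (by omega)]

end QNumbers

lemma sum_Icc_one_eq_sum_range {M : Type*} [AddCommMonoid M] (f : ℕ → M) (n : ℕ) :
    ∑ k ∈ Icc 1 n, f k = ∑ k ∈ range n, f (k + 1) := by
  rw [← Ico_add_one_right_eq_Icc, sum_Ico_eq_sum_range]
  simp [add_comm]

section QExponential

variable {K : Type*} [Field K] {q : K}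

def qConv (q : K) (a b : ℕ → K) (n : ℕ) : K :=
  ∑ k ∈ range (n + 1), qChoose q n k * a k * b (n - k)

lemma qConv_const_mul (c : K) (a b : ℕ → K) (n : ℕ) :
    qConv q (fun k => c * a k) b n = c * qConv q a b n := by
  simp only [qConv, mul_sum]
  exact sum_congr rfl fun _ _ => by ring

def qEGF (q : K) (a : ℕ → K) : PowerSeries K :=
  PowerSeries.mk fun n => a n / qFact q n

@[simp] lemma coeff_qEGF (a : ℕ → K) (n : ℕ) : PowerSeries.coeff n (qEGF q a) = a n / qFact q n :=
  PowerSeries.coeff_mk _ _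

lemma qEGF_mul (hq : ∀ n : ℕ, 1 ≤ n → qInt q n ≠ 0) (a b : ℕ → K) :
    qEGF q a * qEGF q b = qEGF q (qConv q a b) := by
  ext n
  rw [PowerSeries.coeff_mul, Nat.sum_antidiagonal_eq_sum_range_succ
    (fun i j => PowerSeries.coeff i (qEGF q a) * PowerSeries.coeff j (qEGF q b)),
    coeff_qEGF, qConv, sum_div]
  refine sum_congr rfl fun k hk => ?_
  have hkn : n - k + k = n := Nat.sub_add_cancel (by simp only [mem_range] at hk; omega)
  simp only [coeff_qEGF, qChoose]
  rw [← hkn]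
  field_simp [qFact_ne_zero hq]

lemma rescale_qEGF (c : K) (a : ℕ → K) :
    PowerSeries.rescale c (qEGF q a) = qEGF q fun n => c ^ n * a n := by
  ext n
  simp [mul_div_assoc]

lemma rescale_qEGF_one (hq : ∀ n : ℕ, 1 ≤ n → qInt q n ≠ 0) :
    PowerSeries.rescale q (qEGF q 1) =
      (1 + PowerSeries.C (q - 1) * PowerSeries.X) * qEGF q 1 := by
  ext (_ | n)
  · simp [qEGF]
  · rw [add_mul, one_mul, mul_assoc, map_add, PowerSeries.coeff_C_mul,
      PowerSeries.coeff_succ_X_mul, PowerSeries.coeff_rescale, coeff_qEGF, coeff_qEGF,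
      qFact_succ, Pi.one_apply, Pi.one_apply]
    field_simp [qFact_ne_zero hq, hq (n + 1) (by omega)]
    linear_combination -sub_one_mul_qInt q (n + 1)

end QExponential

structure IsQGenocchi {K : Type*} [Field K] (q : K) (G : ℕ → K) : Prop where
  zero : G 0 = 0
  one : G 1 = 1
  recurrence : ∀ n : ℕ, 2 ≤ n → G n + ∑ k ∈ range (n + 1), qChoose q n k * G k = 0

namespace IsQGenocchi

variable {K : Type*} [Field K] {q : K} {G : ℕ → K}

lemma qConv_one_add (hG : IsQGenocchi q G) (n : ℕ) :
    qConv q G 1 n + G n = if n = 1 then 2 else 0 := by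
  rcases n with _ | _ | n
  · simp [qConv, hG.zero]
  · norm_num [qConv, sum_range_succ, qChoose, hG.zero, hG.one]
  · rw [if_neg (by omega)]
    simpa [qConv, add_comm] using hG.recurrence (n + 1 + 1) (by omega)

lemma qEGF_mul_qEGF_one_add_one (hq : ∀ n : ℕ, 1 ≤ n → qInt q n ≠ 0) (hG : IsQGenocchi q G) :
    qEGF q G * (qEGF q 1 + 1) = PowerSeries.C 2 * PowerSeries.X := by
  ext n
  rw [mul_add, mul_one, qEGF_mul hq, map_add, coeff_qEGF, coeff_qEGF, ← add_div,
    hG.qConv_one_add]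
  rcases n with _ | _ | n <;> simp [PowerSeries.coeff_X]

lemma C_sub_one_mul_qEGF_mul_rescale [NeZero (2 : K)] (hq : ∀ n : ℕ, 1 ≤ n → qInt q n ≠ 0)
    (hG : IsQGenocchi q G) :
    PowerSeries.C (q - 1) * (qEGF q (qConv q G 1) * PowerSeries.rescale q (qEGF q G)) =
      PowerSeries.C (2 * q) * qEGF q G - PowerSeries.C 2 * PowerSeries.rescale q (qEGF q G) := by
  set g := qEGF q G
  set E := qEGF q 1
  set r := 1 + PowerSeries.C (q - 1) * PowerSeries.X
  have hg : g * (E + 1) = PowerSeries.C 2 * PowerSeries.X := hG.qEGF_mul_qEGF_one_add_one hq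
  have hg' : PowerSeries.rescale q g * (r * E + 1) = PowerSeries.C (2 * q) * PowerSeries.X := by
    have h2 : PowerSeries.rescale q (PowerSeries.C (2 : K)) = PowerSeries.C 2 := by
      ext (_ | n) <;> simp [PowerSeries.coeff_C]
    have h := congrArg (PowerSeries.rescale q) hg
    rwa [map_mul, map_add, map_one, rescale_qEGF_one hq, map_mul, h2,
      PowerSeries.rescale_X, ← mul_assoc, ← map_mul] at h
  have hE : E + 1 ≠ 0 := fun h => two_ne_zero (α := K) <| by
    simpa [E, qEGF, one_add_one_eq_two] using congrArg PowerSeries.constantCoeff h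
  have hrE : r * E + 1 ≠ 0 := fun h => two_ne_zero (α := K) <| by
    simpa [r, E, qEGF, one_add_one_eq_two] using congrArg PowerSeries.constantCoeff h
  rw [← qEGF_mul hq]
  apply mul_right_cancel₀ (mul_ne_zero hE hrE)
  linear_combination (PowerSeries.C (q - 1) * E * (PowerSeries.rescale q g * (r * E + 1)) -
      PowerSeries.C (2 * q) * (r * E + 1)) * hg +
    (PowerSeries.C (q - 1) * E * (PowerSeries.C 2 * PowerSeries.X) +
      PowerSeries.C 2 * (E + 1)) * hg'

lemma qConv_qConv_one [NeZero (2 : K)] (hq : ∀ n : ℕ, 1 ≤ n → qInt q n ≠ 0) (hq1 : q ≠ 1)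
    (hG : IsQGenocchi q G) (i : ℕ) :
    qConv q (qConv q G 1) (fun k => q ^ k * G k) i = 2 * (1 - qInt q i) * G i := by
  have h := congrArg (PowerSeries.coeff i) (hG.C_sub_one_mul_qEGF_mul_rescale hq)
  rw [rescale_qEGF, qEGF_mul hq, PowerSeries.coeff_C_mul] at h
  simp only [map_sub, PowerSeries.coeff_C_mul, coeff_qEGF] at h
  field_simp [qFact_ne_zero hq] at h
  apply mul_left_cancel₀ (sub_ne_zero.mpr hq1)
  linear_combination h + 2 * G i * sub_one_mul_qInt q i

lemma qConv_alpha [NeZero (2 : K)] (hq : ∀ n : ℕ, 1 ≤ n → qInt q n ≠ 0) (hq1 : q ≠ 1)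
    (hG : IsQGenocchi q G) (i : ℕ) :
    qConv q (fun k => -(1 / (2 * q)) * qConv q G 1 k) (fun k => q ^ k * G k) i =
      (qInt q i - 1) * G i / q := by
  rw [qConv_const_mul, hG.qConv_qConv_one hq hq1]
  field_simp
  ring

lemma qConv_beta [NeZero (2 : K)] (hq0 : q ≠ 0) (hq : ∀ n : ℕ, 1 ≤ n → qInt q n ≠ 0)
    (hq1 : q ≠ 1) (hG : IsQGenocchi q G) {βG : ℕ → K} (hβG0 : βG 0 = 1 / q)
    (hβG : ∀ m : ℕ, 1 ≤ m →
      βG m = ((q - 1) / (2 * q)) * ∑ j ∈ range (m + 1), qChoose q m j * G j) (i : ℕ) :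
    qConv q βG (fun k => q ^ k * G k) i = G i := by
  have hQ := hG.qConv_qConv_one hq hq1 i
  rw [qConv, sum_range_succ', show qConv q G 1 0 = 0 by simp [qConv, hG.zero], mul_zero,
    zero_mul, add_zero] at hQ
  have hβ : ∀ k ∈ range i, qChoose q i (k + 1) * βG (k + 1) * (q ^ (i - (k + 1)) * G (i - (k + 1)))
      = (q - 1) / (2 * q) *
        (qChoose q i (k + 1) * qConv q G 1 (k + 1) * (q ^ (i - (k + 1)) * G (i - (k + 1)))) := by
    intro k _
    rw [hβG (k + 1) (by omega)]
    simp only [qConv, Pi.one_apply, mul_one]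
    ring
  rw [qConv, sum_range_succ', sum_congr rfl hβ, ← mul_sum, hQ, hβG0, qChoose_zero_right hq,
    Nat.sub_zero]
  field_simp
  linear_combination -G i * sub_one_mul_qInt q i

end IsQGenocchi

section Polynomials

variable {K : Type*} [Field K] {q : K}

/-- The Gauss polynomial `(x + y)(x + q y) ⋯ (x + q^(s-1) y)`, expanded by the `q`-binomial
theorem; the product form is `qAddPow_succ`. -/
def qAddPow (q : K) (s : ℕ) : MvPolynomial (Fin 2) K :=
  ∑ p ∈ antidiagonal s, monomial (Finsupp.single 0 p.1 + Finsupp.single 1 p.2)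
    (qFact q s / (qFact q p.1 * qFact q p.2) * q ^ p.2.choose 2)

lemma appell_eq_sum_qAddPow (hq : ∀ n : ℕ, 1 ≤ n → qInt q n ≠ 0) (a : ℕ → K) (n : ℕ) :
    appell q a n = ∑ s ∈ range (n + 1), C (qChoose q n s * a (n - s)) * qAddPow q s := by
  rw [appell, ← sum_range_reflect]
  refine sum_congr rfl fun s hs => ?_
  have hs : s ≤ n := by simp only [mem_range] at hs; omega
  rw [qAddPow, Nat.sum_antidiagonal_eq_sum_range_succ_mk, mul_sum,
    show n + 1 - 1 - s = n - s by omega, show n + 1 - (n - s) = s + 1 by omega]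
  refine sum_congr rfl fun j hj => ?_
  have hj : j ≤ s := by simp only [mem_range] at hj; omega
  rw [C_mul_monomial, show n - (n - s) - j = s - j by omega, qChoose, Nat.choose_two_right]
  congr 1
  field_simp [qFact_ne_zero hq]

lemma X_zero_mul_monomial (j l : ℕ) (c : K) :
    (X 0 : MvPolynomial (Fin 2) K) * monomial (Finsupp.single 0 j + Finsupp.single 1 l) c =
      monomial (Finsupp.single 0 (j + 1) + Finsupp.single 1 l) c := by
  rw [X, monomial_mul, one_mul, ← add_assoc, ← Finsupp.single_add, add_comm 1 j]

lemma X_one_mul_monomial (j l : ℕ) (c : K) :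
    (X 1 : MvPolynomial (Fin 2) K) * monomial (Finsupp.single 0 j + Finsupp.single 1 l) c =
      monomial (Finsupp.single 0 j + Finsupp.single 1 (l + 1)) c := by
  rw [X, monomial_mul, one_mul, add_left_comm, ← Finsupp.single_add, add_comm 1 l]

lemma qAddPow_succ (hq : ∀ n : ℕ, 1 ≤ n → qInt q n ≠ 0) (s : ℕ) :
    qAddPow q (s + 1) = (X 0 + C (q ^ s) * X 1) * qAddPow q s := by
  set w : ℕ × ℕ → K := fun p => qFact q s / (qFact q p.1 * qFact q p.2) * q ^ p.2.choose 2
  -- `[j + l] = [j] + q^j [l]`: the first part comes from `x M_s`, the second from `q^s y M_s`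
  have hsplit : ∀ p ∈ antidiagonal (s + 1),
      qFact q (s + 1) / (qFact q p.1 * qFact q p.2) * q ^ p.2.choose 2 =
        qInt q p.1 * w p + q ^ p.1 * qInt q p.2 * w p := by
    intro p hp
    rw [Finset.HasAntidiagonal.mem_antidiagonal] at hp
    rw [qFact_succ, ← hp, qInt_add]
    ring
  rw [qAddPow, sum_congr rfl fun p hp => by rw [hsplit p hp, map_add], sum_add_distrib,
    Nat.sum_antidiagonal_succ, Nat.sum_antidiagonal_succ', add_mul, qAddPow, mul_sum, mul_sum]
  simp only [qInt_zero, zero_mul, mul_zero, monomial_zero, zero_add]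
  congr 1 <;> refine sum_congr rfl fun p hp => ?_
  · rw [X_zero_mul_monomial]
    congr 1
    simp only [w, qFact_succ]
    field_simp [qFact_ne_zero hq, hq (p.1 + 1) (by omega)]
  · rw [mul_assoc (C _), X_one_mul_monomial, C_mul_monomial]
    congr 1
    rw [Finset.HasAntidiagonal.mem_antidiagonal] at hp
    simp only [w, qFact_succ, Nat.choose_succ_succ', Nat.choose_one_right, pow_add, ← hp]
    field_simp [qFact_ne_zero hq, hq (p.2 + 1) (by omega)]

lemma coeff_qDeriv (v : Fin 2) (P : MvPolynomial (Fin 2) K) (d : Fin 2 →₀ ℕ) :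
    coeff d (qDeriv q v P) = coeff (d + Finsupp.single v 1) P * qInt q (d v + 1) := by
  classical
  simp only [qDeriv, coeff_sum, coeff_monomial]
  rw [sum_eq_single (d + Finsupp.single v 1)]
  · simp
  · intro m _ hne
    split_ifs with he
    · have hv : m v = 0 := by
        by_contra hv
        exact hne (by rw [← he, tsub_add_cancel_of_le (Finsupp.single_le_iff.mpr (by omega))])
      simp [hv]
    · rfl
  · intro h
    rw [notMem_support_iff] at h
    simp [h]

lemma qDeriv_C_mul (v : Fin 2) (c : K) (P : MvPolynomial (Fin 2) K) :
    qDeriv q v (C c * P) = C c * qDeriv q v P := by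
  ext d
  simp [coeff_qDeriv, mul_assoc]

lemma qDeriv_sum {ι : Type*} (v : Fin 2) (s : Finset ι) (P : ι → MvPolynomial (Fin 2) K) :
    qDeriv q v (∑ i ∈ s, P i) = ∑ i ∈ s, qDeriv q v (P i) := by
  ext d
  simp [coeff_qDeriv, coeff_sum, sum_mul]

lemma qDeriv_monomial (v : Fin 2) (e : Fin 2 →₀ ℕ) (c : K) :
    qDeriv q v (monomial e c) = monomial (e - Finsupp.single v 1) (c * qInt q (e v)) := by
  classical
  by_cases hc : c = 0
  · simp [qDeriv, hc]
  · simp [qDeriv, support_monomial, hc]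

lemma qDeriv_zero_qAddPow_zero : qDeriv q 0 (qAddPow q 0) = 0 := by
  simp only [qAddPow, Finset.Nat.antidiagonal_zero, sum_singleton, qDeriv_monomial]
  simp

lemma qDeriv_zero_qAddPow_succ (hq : ∀ n : ℕ, 1 ≤ n → qInt q n ≠ 0) (s : ℕ) :
    qDeriv q 0 (qAddPow q (s + 1)) = C (qInt q (s + 1)) * qAddPow q s := by
  rw [qAddPow, qDeriv_sum, Nat.sum_antidiagonal_succ, qAddPow, mul_sum]
  simp only [qDeriv_monomial, Finsupp.single_add, Finsupp.coe_add, Pi.add_apply,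
    Finsupp.single_eq_same, Finsupp.single_eq_of_ne zero_ne_one, add_zero, qInt_zero, mul_zero,
    monomial_zero, zero_add]
  refine sum_congr rfl fun p _ => ?_
  rw [add_right_comm, add_tsub_cancel_right, C_mul_monomial, qFact_succ, qFact_succ]
  congr 1
  field_simp [qFact_ne_zero hq, hq (p.1 + 1) (by omega)]

lemma qDeriv_zero_appell_succ (hq : ∀ n : ℕ, 1 ≤ n → qInt q n ≠ 0) (a : ℕ → K) (n : ℕ) :
    qDeriv q 0 (appell q a (n + 1)) = C (qInt q (n + 1)) * appell q a n := by
  rw [appell_eq_sum_qAddPow hq, appell_eq_sum_qAddPow hq, qDeriv_sum, sum_range_succ', mul_sum]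
  simp only [qDeriv_C_mul, qDeriv_zero_qAddPow_zero, qDeriv_zero_qAddPow_succ hq, mul_zero,
    add_zero]
  refine sum_congr rfl fun s hs => ?_
  rw [← mul_assoc, ← mul_assoc, ← map_mul, ← map_mul, Nat.add_sub_add_right]
  congr 2
  linear_combination -a (n - s) * qInt_succ_mul_qChoose hq
    (show s ≤ n by simp only [mem_range] at hs; omega)

lemma iterate_qDeriv_zero_appell (hq : ∀ n : ℕ, 1 ≤ n → qInt q n ≠ 0) (a : ℕ → K) (n k : ℕ) :
    (qDeriv q 0)^[k] (appell q a (n + k)) = C (qFact q (n + k) / qFact q n) * appell q a n := by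
  induction k generalizing n with
  | zero => simp [div_self (qFact_ne_zero hq n)]
  | succ k ih =>
    rw [Function.iterate_succ_apply', ← add_assoc, add_right_comm, ih, qDeriv_C_mul,
      qDeriv_zero_appell_succ hq, ← mul_assoc, ← map_mul, qFact_succ q n]
    congr 2
    field_simp [qFact_ne_zero hq, hq (n + 1) (by omega)]

lemma substX_monomial (c : K) (e : Fin 2 →₀ ℕ) (a : K) :
    substX c (monomial e a) = monomial e (c ^ e 0 * a) := by
  rw [substX, aeval_monomial, Finsupp.prod_fintype _ _ fun _ => pow_zero _, Fin.prod_univ_two,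
    if_pos rfl, if_neg (by decide), monomial_eq, Finsupp.prod_fintype _ _ fun _ => pow_zero _,
    Fin.prod_univ_two, algebraMap_eq, mul_pow, map_mul, map_pow]
  ring

lemma coeff_substX (c : K) (P : MvPolynomial (Fin 2) K) (d : Fin 2 →₀ ℕ) :
    coeff d (substX c P) = c ^ d 0 * coeff d P := by
  classical
  induction P using MvPolynomial.induction_on' with
  | monomial e a =>
    rw [substX_monomial, coeff_monomial, coeff_monomial]
    split_ifs with h <;> simp [h]
  | add P Q hP hQ => rw [substX, map_add, coeff_add, ← substX, ← substX, hP, hQ, coeff_add, mul_add]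

lemma substX_eq (P : MvPolynomial (Fin 2) K) :
    substX q P = P + C (q - 1) * X 0 * qDeriv q 0 P := by
  classical
  ext d
  rw [coeff_substX, coeff_add, mul_assoc, coeff_C_mul, coeff_X_mul']
  split_ifs with hd
  · have hd0 : 1 ≤ d 0 := Nat.one_le_iff_ne_zero.mpr (Finsupp.mem_support_iff.mp hd)
    rw [coeff_qDeriv, tsub_add_cancel_of_le (Finsupp.single_le_iff.mpr hd0)]
    simp only [Finsupp.tsub_apply, Finsupp.single_eq_same, Nat.sub_add_cancel hd0]
    linear_combination -coeff d P * sub_one_mul_qInt q (d 0)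
  · simp [Finsupp.notMem_support_iff.mp hd]

lemma sum_qChoose_mul_appell (hq : ∀ n : ℕ, 1 ≤ n → qInt q n ≠ 0) (a b : ℕ → K) (n : ℕ) :
    ∑ k ∈ range (n + 1), C (qChoose q n k * b k * q ^ (n - k)) * appell q a (n - k) =
      ∑ s ∈ range (n + 1),
        C (qChoose q n s * q ^ s * qConv q b (fun i => q ^ i * a i) (n - s)) * qAddPow q s := by
  simp only [appell_eq_sum_qAddPow hq, mul_sum, qConv, map_sum, sum_mul]
  rw [sum_comm' (t' := range (n + 1)) (s' := fun s => range (n - s + 1))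
    fun k s => by simp only [mem_range]; omega]
  refine sum_congr rfl fun s hs => sum_congr rfl fun k hk => ?_
  simp only [mem_range] at hs hk
  rw [← mul_assoc, ← map_mul]
  congr 2
  have hpow : q ^ (n - k) = q ^ s * q ^ (n - s - k) := by rw [← pow_add]; congr 1; omega
  rw [hpow, show n - k - s = n - s - k by omega]
  linear_combination (b k * q ^ s * q ^ (n - s - k) * a (n - s - k)) *
    qChoose_mul_qChoose hq (show k + s ≤ n by omega)

lemma qInt_mul_X_appell (hq : ∀ n : ℕ, 1 ≤ n → qInt q n ≠ 0) (a : ℕ → K) (m : ℕ) :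
    C (qInt q (m + 1)) * (X 0 * appell q a m +
      X 1 * ∑ s ∈ range (m + 1), C (qChoose q m s * q ^ s * a (m - s)) * qAddPow q s) =
      ∑ s ∈ range (m + 1 + 1),
        C (qInt q s * qChoose q (m + 1) s * a (m + 1 - s)) * qAddPow q s := by
  rw [appell_eq_sum_qAddPow hq, mul_sum, mul_sum, ← sum_add_distrib, mul_sum]
  conv_rhs => rw [sum_range_succ']
  simp only [qInt_zero, zero_mul, map_zero, add_zero]
  refine sum_congr rfl fun s hs => ?_
  rw [qAddPow_succ hq, Nat.add_sub_add_right, mul_comm (qInt q (s + 1)),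
    ← qInt_succ_mul_qChoose hq (by simp only [mem_range] at hs; omega)]
  simp only [map_mul]
  ring

end Polynomials

section Assembly

variable {K : Type*} [Field K] {q : K}

lemma C_mul_iterate_qDeriv_appell (hq : ∀ n : ℕ, 1 ≤ n → qInt q n ≠ 0) (a : ℕ → K) (u v : K)
    {n k : ℕ} (hk : k ≤ n) :
    C (q ^ (n - k) / qFact q k) * (C u + C v * X 1) * (qDeriv q 0)^[k] (appell q a n) =
      C (qChoose q n k * u * q ^ (n - k)) * appell q a (n - k) +
        X 1 * (C (qChoose q n k * v * q ^ (n - k)) * appell q a (n - k)) := by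
  obtain ⟨i, rfl⟩ : ∃ i, n = i + k := ⟨n - k, by omega⟩
  have hs : q ^ i / qFact q k * (qFact q (i + k) / qFact q i) = qChoose q (i + k) k * q ^ i := by
    rw [qChoose, Nat.add_sub_cancel]
    field_simp [qFact_ne_zero hq]
  rw [iterate_qDeriv_zero_appell hq, Nat.add_sub_cancel]
  calc _ = C (q ^ i / qFact q k * (qFact q (i + k) / qFact q i)) * (C u + C v * X 1) *
          appell q a i := by
        simp only [map_mul]; ring
    _ = _ := by rw [hs]; simp only [map_mul]; ring

lemma pow_mul_X_mul_qDeriv_sub_qInt_mul_substX (n : ℕ) (P : MvPolynomial (Fin 2) K) :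
    C (q ^ n) * X 0 * qDeriv q 0 P - C (qInt q n) * substX q P =
      X 0 * qDeriv q 0 P - C (qInt q n) * P := by
  have h := congrArg (C (σ := Fin 2)) (sub_one_mul_qInt q n)
  rw [substX_eq]
  simp only [map_mul, map_sub, map_one] at h ⊢
  linear_combination (-(X 0 * qDeriv q 0 P)) * h

lemma IsQGenocchi.sum_alpha_mul_appell [NeZero (2 : K)] (hq : ∀ n : ℕ, 1 ≤ n → qInt q n ≠ 0)
    (hq1 : q ≠ 1) {G : ℕ → K} (hG : IsQGenocchi q G) {αG : ℕ → K}
    (hαG : ∀ k : ℕ, 1 ≤ k → αG k = -(1 / (2 * q)) * ∑ j ∈ range (k + 1), qChoose q k j * G j)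
    (n : ℕ) :
    ∑ k ∈ Icc 1 n, C (qChoose q n k * αG k * q ^ (n - k)) * appell q G (n - k) =
      ∑ s ∈ range (n + 1),
        C (qChoose q n s * q ^ s * ((qInt q (n - s) - 1) * G (n - s) / q)) * qAddPow q s := by
  have h := sum_qChoose_mul_appell hq G (fun k => -(1 / (2 * q)) * qConv q G 1 k) n
  simp only [hG.qConv_alpha hq hq1] at h
  rw [← h, sum_range_succ', sum_Icc_one_eq_sum_range,
    show qConv q G 1 0 = 0 by simp [qConv, hG.zero]]
  simp only [mul_zero, zero_mul, map_zero, add_zero]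
  refine sum_congr rfl fun k _ => ?_
  simp [hαG (k + 1) (by omega), qConv]

lemma IsQGenocchi.sum_beta_mul_appell [NeZero (2 : K)] (hq0 : q ≠ 0)
    (hq : ∀ n : ℕ, 1 ≤ n → qInt q n ≠ 0) (hq1 : q ≠ 1) {G : ℕ → K} (hG : IsQGenocchi q G)
    {βG : ℕ → K} (hβG0 : βG 0 = 1 / q)
    (hβG : ∀ m : ℕ, 1 ≤ m →
      βG m = ((q - 1) / (2 * q)) * ∑ j ∈ range (m + 1), qChoose q m j * G j) (m : ℕ) :
    ∑ k ∈ Icc 1 (m + 1), C (qChoose q (m + 1) k * (qInt q k * βG (k - 1)) * q ^ (m + 1 - k)) *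
        appell q G (m + 1 - k) =
      C (qInt q (m + 1)) *
        ∑ s ∈ range (m + 1), C (qChoose q m s * q ^ s * G (m - s)) * qAddPow q s := by
  have h := sum_qChoose_mul_appell hq G βG m
  simp only [hG.qConv_beta hq0 hq hq1 hβG0 hβG] at h
  rw [← h, mul_sum, sum_Icc_one_eq_sum_range]
  refine sum_congr rfl fun k hk => ?_
  rw [Nat.add_sub_cancel, Nat.add_sub_add_right, ← mul_assoc (C _), ← map_mul]
  congr 2
  linear_combination -(βG k * q ^ (m - k)) * qInt_succ_mul_qChoose hq
    (show k ≤ m by simp only [mem_range] at hk; omega)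

lemma appell_qAddPow_coefficients_cancel (hq0 : q ≠ 0) (hq : ∀ n : ℕ, 1 ≤ n → qInt q n ≠ 0)
    (a : ℕ → K) (m : ℕ) :
    C (q ^ m - qInt q (m + 1)) * appell q a (m + 1) +
      ∑ s ∈ range (m + 1 + 1), C (qChoose q (m + 1) s * q ^ s *
        ((qInt q (m + 1 - s) - 1) * a (m + 1 - s) / q)) * qAddPow q s +
      ∑ s ∈ range (m + 1 + 1),
        C (qInt q s * qChoose q (m + 1) s * a (m + 1 - s)) * qAddPow q s = 0 := by
  rw [appell_eq_sum_qAddPow hq, mul_sum, ← sum_add_distrib, ← sum_add_distrib]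
  refine sum_eq_zero fun s hs => ?_
  obtain ⟨i, hi⟩ : ∃ i, m + 1 = s + i := ⟨m + 1 - s, by simp only [mem_range] at hs; omega⟩
  have hpow : q * q ^ m = q ^ s * q ^ i := by rw [← pow_succ', hi, pow_add]
  rw [← mul_assoc, ← map_mul, ← add_mul, ← add_mul, ← map_add, ← map_add]
  convert zero_mul (qAddPow q s) using 2
  rw [C_eq_zero, hi, Nat.add_sub_cancel_left, qInt_add]
  field_simp
  linear_combination a i * qChoose q (s + i) s * (hpow - q ^ s * sub_one_mul_qInt q i)

end Assembly

/-- Partial `q`-difference equation in `x` for 2D `q`-Genocchi polynomials. -/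
theorem qGenocchi2D_qDifference_x
    {K : Type*} [Field K] [CharZero K] (q : K) (hq0 : q ≠ 0) (hq1 : q ≠ 1)
    (hq : ∀ n : ℕ, 1 ≤ n → qInt q n ≠ 0)
    (G : ℕ → K) (hG0 : G 0 = 0) (hG1 : G 1 = 1)
    (hG : ∀ n : ℕ, 2 ≤ n → G n + ∑ k ∈ Finset.range (n + 1), qChoose q n k * G k = 0)
    (αG βG : ℕ → K)
    (hαG : ∀ k : ℕ, 1 ≤ k →
      αG k = -(1 / (2 * q)) * ∑ j ∈ Finset.range (k + 1), qChoose q k j * G j)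
    (hβG0 : βG 0 = 1 / q)
    (hβG : ∀ m : ℕ, 1 ≤ m →
      βG m = ((q - 1) / (2 * q)) * ∑ j ∈ Finset.range (m + 1), qChoose q m j * G j)
    (n : ℕ) (hn : 1 ≤ n) :
    C (q ^ (n - 1)) * appell q G n +
      (∑ k ∈ Finset.Icc 1 n, C (q ^ (n - k) / qFact q k) *
        (C (αG k) + C (qInt q k * βG (k - 1)) * X 1) * (qDeriv q 0)^[k] (appell q G n)) +
      C (q ^ n) * X 0 * qDeriv q 0 (appell q G n) -
      C (qInt q n) * substX q (appell q G n) = 0 := by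
  have hGq : IsQGenocchi q G := ⟨hG0, hG1, hG⟩
  obtain ⟨m, rfl⟩ : ∃ m, n = m + 1 := ⟨n - 1, by omega⟩
  rw [sum_congr rfl fun k hk => C_mul_iterate_qDeriv_appell hq G _ _ (mem_Icc.mp hk).2,
    sum_add_distrib, ← mul_sum, hGq.sum_alpha_mul_appell hq hq1 hαG,
    hGq.sum_beta_mul_appell hq0 hq hq1 hβG0 hβG, add_sub_assoc,
    pow_mul_X_mul_qDeriv_sub_qInt_mul_substX, qDeriv_zero_appell_succ hq, Nat.add_sub_cancel]
  rw [← appell_qAddPow_coefficients_cancel hq0 hq G m, ← qInt_mul_X_appell hq G m, map_sub]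
  ring
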